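/- Suppose all vote shares p_d are distinct, and let S ∈ {1,…,N−1} satisfy S + 1 ≤ a (party A is underrepresented at S by at least one seat). Then for every w ≥ 0, the seat total S minimizes Φ_p(·; w) over {0,…,N} if and only if 1 − 2·p_(S) ≤ w ≤ 1 − 2·p_(S+1). -/
import Mathlib


open Finset

/-- Sum of the `S` largest entries of the vote-share profile `p`. -/
noncomputable def topSum {N : ℕ} (p : Fin N → ℝ) (S : ℕ) : ℝ :=
  ∑ i : Fin N, if (i : ℕ) < S then p (Tuple.sort p i.rev) else 0

/-- `ordStat p i` is the `(i+1)`-th largest entry of `p` (so `ordStat p ⟨S-1,_⟩` is `p_(S)`). -/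
noncomputable def ordStat {N : ℕ} (p : Fin N → ℝ) (i : Fin N) : ℝ :=
  p (Tuple.sort p i.rev)

/-- Total misrepresentation `Φ_p(S; w) = S + a − 2·Γ_p(S) + w·|a − S|` of a top-`S`
allocation at weight `w`, where `a = ∑ d, p d`. -/
noncomputable def PhiS {N : ℕ} (p : Fin N → ℝ) (S : ℕ) (w : ℝ) : ℝ :=
  (S : ℝ) + (∑ d, p d) - 2 * topSum p S + w * |(∑ d, p d) - (S : ℝ)|

lemma ordStat_anti {N : ℕ} (p : Fin N → ℝ) (hinj : Function.Injective p)
    {i j : Fin N} (h : i ≤ j) : ordStat p j ≤ ordStat p i := by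
  have hmono : StrictMono (p ∘ Tuple.sort p) :=
    (Tuple.monotone_sort p).strictMono_of_injective
      (hinj.comp (Tuple.sort p).injective)
  have : j.rev ≤ i.rev := by
    rw [Fin.rev_le_rev]; exact h
  exact hmono.monotone this

lemma topSum_succ {N : ℕ} (p : Fin N → ℝ) (S : ℕ) (h : S < N) :
    topSum p (S + 1) = topSum p S + ordStat p ⟨S, h⟩ := by
  unfold topSum ordStat
  have key : ∀ i : Fin N, (if (i : ℕ) < S + 1 then p (Tuple.sort p i.rev) else 0)
      = (if (i : ℕ) < S then p (Tuple.sort p i.rev) else 0)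
        + (if i = ⟨S, h⟩ then p (Tuple.sort p i.rev) else 0) := by
    intro i
    rcases eq_or_ne i (⟨S, h⟩ : Fin N) with hi | hi
    · subst hi; simp
    · have hi' : (i : ℕ) ≠ S := fun hh => hi (Fin.ext hh)
      have hiff : ((i : ℕ) < S + 1) ↔ ((i : ℕ) < S) := by omega
      simp [hi, hiff]
  rw [Finset.sum_congr rfl (fun i _ => key i), Finset.sum_add_distrib,
    Finset.sum_ite_eq' Finset.univ (⟨S, h⟩ : Fin N) (fun i => p (Tuple.sort p i.rev))]
  simp

lemma phi_succ {N : ℕ} (p : Fin N → ℝ) (w : ℝ) (S : ℕ) (h : S < N) :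
    PhiS p (S + 1) w = PhiS p S w + (1 - 2 * ordStat p ⟨S, h⟩)
      + w * (|(∑ d, p d) - ((S : ℝ) + 1)| - |(∑ d, p d) - (S : ℝ)|) := by
  unfold PhiS
  rw [topSum_succ p S h]
  push_cast
  ring

/-- Corollary 1, underrepresented case.
Suppose all vote shares are distinct and `S ∈ {1,…,N−1}` satisfies `S + 1 ≤ a`
(party A is underrepresented at `S` by at least one seat). Then for every `w ≥ 0`,
`S` minimizes `Φ_p(·; w)` over `{0,…,N}` iff `1 − 2·p_(S) ≤ w ≤ 1 − 2·p_(S+1)`. -/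
theorem stmt3 (N : ℕ) (hN : 3 ≤ N) (p : Fin N → ℝ)
    (hp : ∀ d, 0 ≤ p d ∧ p d ≤ 1) (hinj : Function.Injective p)
    (S : ℕ) (hS1 : 1 ≤ S) (hS2 : S ≤ N - 1)
    (ha : (S : ℝ) + 1 ≤ ∑ d, p d)
    (w : ℝ) (hw : 0 ≤ w) :
    (∀ S' ≤ N, PhiS p S w ≤ PhiS p S' w) ↔
      (1 - 2 * ordStat p ⟨S - 1, by omega⟩ ≤ w ∧
       w ≤ 1 - 2 * ordStat p ⟨S, by omega⟩) := by
  set a := ∑ d, p d with ha_def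
  have hSN : S < N := by omega
  have hS1N : S - 1 < N := by omega
  -- exact difference formula below a
  have exact_diff : ∀ m (hm : m < N), (m : ℝ) + 1 ≤ a →
      PhiS p (m + 1) w = PhiS p m w + (1 - 2 * ordStat p ⟨m, hm⟩ - w) := by
    intro m hm hma
    rw [phi_succ p w m hm]
    have h1 : |a - ((m : ℝ) + 1)| = a - ((m : ℝ) + 1) := abs_of_nonneg (by linarith)
    have h2 : |a - (m : ℝ)| = a - (m : ℝ) := abs_of_nonneg (by linarith)
    rw [← ha_def, h1, h2]; ring
  constructor
  · intro hmin
    constructor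
    · have h1 := hmin (S - 1) (by omega)
      have heq : S - 1 + 1 = S := by omega
      have hma : ((S - 1 : ℕ) : ℝ) + 1 ≤ a := by
        have h0 : S - 1 ≤ S := by omega
        have : ((S - 1 : ℕ) : ℝ) ≤ (S : ℝ) := by exact_mod_cast h0
        linarith
      have := exact_diff (S - 1) hS1N hma
      rw [heq] at this
      rw [this] at h1
      linarith
    · have h1 := hmin (S + 1) (by omega)
      have := exact_diff S hSN ha
      rw [this] at h1
      linarith
  · rintro ⟨hw1, hw2⟩ S' hS'
    have right : ∀ k, S + k ≤ N → PhiS p S w ≤ PhiS p (S + k) w := by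
      intro k
      induction k with
      | zero => intro _; simp
      | succ k ih =>
        intro hk
        have hkN : S + k < N := by omega
        have step : PhiS p (S + k) w ≤ PhiS p (S + k + 1) w := by
          rw [phi_succ p w (S + k) hkN, ← ha_def]
          have hq : ordStat p ⟨S + k, hkN⟩ ≤ ordStat p ⟨S, hSN⟩ :=
            ordStat_anti p hinj (by simp [Fin.le_def])
          have habs : |a - ((S + k : ℕ) : ℝ)| - |a - (((S + k : ℕ) : ℝ) + 1)| ≤ 1 := by
            have := abs_sub_abs_le_abs_sub (a - ((S + k : ℕ) : ℝ)) (a - (((S + k : ℕ) : ℝ) + 1))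
            have h1 : |(a - ((S + k : ℕ) : ℝ)) - (a - (((S + k : ℕ) : ℝ) + 1))| = 1 := by
              rw [show (a - ((S + k : ℕ) : ℝ)) - (a - (((S + k : ℕ) : ℝ) + 1)) = 1 by ring]
              exact abs_one
            linarith
          have hwd : -w ≤ w * (|a - (((S + k : ℕ) : ℝ) + 1)| - |a - ((S + k : ℕ) : ℝ)|) := by
            nlinarith
          have hnn : (0 : ℝ) ≤ 1 - 2 * ordStat p ⟨S + k, hkN⟩ - w := by linarith
          push_cast
          push_cast at hwd
          linarith
        exact le_trans (ih (by omega)) step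
    have left : ∀ k, k ≤ S → PhiS p S w ≤ PhiS p (S - k) w := by
      intro k
      induction k with
      | zero => intro _; simp
      | succ k ih =>
        intro hk
        have hm : S - (k + 1) < N := by omega
        have hma : ((S - (k + 1) : ℕ) : ℝ) + 1 ≤ a := by
          have h0 : S - (k + 1) ≤ S - 1 := by omega
          have h2 : ((S - (k + 1) : ℕ) : ℝ) ≤ ((S - 1 : ℕ) : ℝ) := by exact_mod_cast h0
          have h3 : ((S - 1 : ℕ) : ℝ) = (S : ℝ) - 1 := by
            push_cast [Nat.cast_sub hS1]; ring
          linarith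
        have step : PhiS p (S - (k + 1) + 1) w ≤ PhiS p (S - (k + 1)) w := by
          rw [exact_diff (S - (k + 1)) hm hma]
          have hq : ordStat p ⟨S - 1, hS1N⟩ ≤ ordStat p ⟨S - (k + 1), hm⟩ :=
            ordStat_anti p hinj (by simp [Fin.le_def]; omega)
          linarith
        have heq : S - (k + 1) + 1 = S - k := by omega
        rw [heq] at step
        exact le_trans (ih (by omega)) step
    rcases le_or_gt S S' with hle | hlt
    · obtain ⟨k, rfl⟩ := Nat.exists_eq_add_of_le hle
      exact right k hS'
    · have : S' = S - (S - S') := by omega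
      rw [this]
      exact left (S - S') (by omega)
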